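/- arXiv:2102.12422 — 2 statements merged into one kernel-verified Lean document; each statement's English description precedes it below -/
import Mathlib

section
/- For every ρ ∈ [0,1], 2^ρ ≥ 1 + (2/π)·arcsin(ρ), with equality exactly at ρ = 0 and ρ = 1. -/
open Real Set

/-- Auxiliary function: `f(x) = 2^x - 1 - (2/π) arcsin x` written via `exp`. -/
noncomputable def stmt15F (x : ℝ) : ℝ :=
  Real.exp (Real.log 2 * x) - 1 - (2 / π) * Real.arcsin x

/-- Auxiliary function `g(x) = e^{x ln 2} √(1-x²)`. -/
noncomputable def stmt15G (x : ℝ) : ℝ :=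
  Real.exp (Real.log 2 * x) * Real.sqrt (1 - x ^ 2)

lemma stmt15F_zero : stmt15F 0 = 0 := by
  simp [stmt15F]

lemma stmt15F_one : stmt15F 1 = 0 := by
  have hπ : (π : ℝ) ≠ 0 := Real.pi_ne_zero
  simp only [stmt15F, mul_one, Real.exp_log two_pos, Real.arcsin_one]
  field_simp
  ring

lemma stmt15F_cont : Continuous stmt15F := by
  unfold stmt15F
  continuity

/-- Derivative of `F` on `(-1,1)`. -/
lemma stmt15F_deriv {x : ℝ} (hx : x ∈ Set.Ioo (-1:ℝ) 1) :
    HasDerivAt stmt15F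
      (Real.log 2 * Real.exp (Real.log 2 * x) - (2 / π) * (1 / Real.sqrt (1 - x ^ 2))) x := by
  have h1 : HasDerivAt (fun y : ℝ => Real.log 2 * y) (Real.log 2) x := by
    simpa using (hasDerivAt_id x).const_mul (Real.log 2)
  have hexp : HasDerivAt (fun y : ℝ => Real.exp (Real.log 2 * y))
      (Real.exp (Real.log 2 * x) * Real.log 2) x := h1.exp
  have harc : HasDerivAt Real.arcsin (1 / Real.sqrt (1 - x ^ 2)) x :=
    Real.hasDerivAt_arcsin (by linarith [hx.1]) (by linarith [hx.2])
  have := (hexp.sub_const 1).sub (harc.const_mul (2 / π))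
  exact this.congr_deriv (by ring)

/-- `g > 2/π` on `[0, 0.52]`. -/
lemma stmt15_claimB {x : ℝ} (h0 : 0 ≤ x) (h1 : x ≤ 0.52) :
    2 / π < Real.log 2 * stmt15G x := by
  have hL1 : (0.6931:ℝ) < Real.log 2 := by
    have := Real.log_two_gt_d9; linarith
  have hL2 : Real.log 2 < 0.6932 := by
    have := Real.log_two_lt_d9; linarith
  have hπ1 : (3.1415:ℝ) < π := by have := Real.pi_gt_d6; linarith
  have hπ2 : π < 3.1416 := by have := Real.pi_lt_d6; linarith
  have hx2 : x ^ 2 ≤ 0.2704 := by nlinarith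
  have hs0 : (0:ℝ) ≤ 1 - x ^ 2 := by nlinarith
  have hs1 : 1 - x ^ 2 ≤ Real.sqrt (1 - x ^ 2) := by
    have h := Real.sq_sqrt hs0
    have h2 := Real.sqrt_nonneg (1 - x ^ 2)
    nlinarith
  have hexp : 1 + Real.log 2 * x ≤ Real.exp (Real.log 2 * x) := by
    have := Real.add_one_le_exp (Real.log 2 * x); linarith
  have hpos : (0:ℝ) < 1 + Real.log 2 * x := by nlinarith
  have key : (1 + Real.log 2 * x) * (1 - x ^ 2) ≤ stmt15G x := by
    unfold stmt15G
    exact mul_le_mul hexp hs1 hs0 (le_trans hpos.le hexp)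
  have hsq' : x ^ 2 ≤ 0.52 * x := by nlinarith
  have hcube : x ^ 3 ≤ 0.2704 * x := by nlinarith [mul_nonneg h0 (by linarith : (0:ℝ) ≤ 0.2704 - x ^ 2)]
  have hq : (0.99:ℝ) ≤ (1 + Real.log 2 * x) * (1 - x ^ 2) := by
    nlinarith [mul_nonneg h0 (by linarith : (0:ℝ) ≤ 0.2704 - x ^ 2),
      mul_nonneg h0 (by linarith : (0:ℝ) ≤ 0.52 - x),
      mul_nonneg (pow_nonneg h0 3) (by linarith : (0:ℝ) ≤ 0.6932 - Real.log 2)]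
  have hLG : (0.686:ℝ) ≤ Real.log 2 * stmt15G x := by nlinarith
  rw [div_lt_iff₀ Real.pi_pos]
  nlinarith

/-- `g` is strictly decreasing on `[0.52, 1]`. -/
lemma stmt15_claimC : StrictAntiOn stmt15G (Set.Icc (0.52:ℝ) 1) := by
  have hcont : ContinuousOn stmt15G (Set.Icc (0.52:ℝ) 1) := by
    unfold stmt15G; fun_prop
  refine strictAntiOn_of_deriv_neg (convex_Icc _ _) hcont ?_
  intro x hx
  rw [interior_Icc] at hx
  obtain ⟨hxl, hxr⟩ := hx
  have hs0 : (0:ℝ) < 1 - x ^ 2 := by nlinarith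
  have hsne : (1 - x ^ 2) ≠ 0 := ne_of_gt hs0
  have hsq : (0:ℝ) < Real.sqrt (1 - x ^ 2) := Real.sqrt_pos.mpr hs0
  have hinner : HasDerivAt (fun y : ℝ => 1 - y ^ 2) (-(2 * x)) x := by
    simpa using ((hasDerivAt_pow 2 x).const_sub 1)
  have hsqrt : HasDerivAt (fun y : ℝ => Real.sqrt (1 - y ^ 2))
      (1 / (2 * Real.sqrt (1 - x ^ 2)) * (-(2 * x))) x :=
    (Real.hasDerivAt_sqrt hsne).comp x hinner
  have h1 : HasDerivAt (fun y : ℝ => Real.log 2 * y) (Real.log 2) x := by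
    simpa using (hasDerivAt_id x).const_mul (Real.log 2)
  have hexp : HasDerivAt (fun y : ℝ => Real.exp (Real.log 2 * y))
      (Real.exp (Real.log 2 * x) * Real.log 2) x := h1.exp
  have hG : HasDerivAt stmt15G
      (Real.exp (Real.log 2 * x) * Real.log 2 * Real.sqrt (1 - x ^ 2) +
        Real.exp (Real.log 2 * x) * (1 / (2 * Real.sqrt (1 - x ^ 2)) * (-(2 * x)))) x :=
    hexp.mul hsqrt
  rw [hG.deriv]
  have hL2 : Real.log 2 < 0.6932 := by
    have := Real.log_two_lt_d9; linarith
  have hL0 : (0:ℝ) < Real.log 2 := Real.log_pos (by norm_num)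
  have hLs : Real.log 2 * (1 - x ^ 2) < x := by nlinarith
  have hsq2 : Real.sqrt (1 - x ^ 2) ^ 2 = 1 - x ^ 2 := Real.sq_sqrt hs0.le
  have hepos : (0:ℝ) < Real.exp (Real.log 2 * x) := Real.exp_pos _
  have hsne' : Real.sqrt (1 - x ^ 2) ≠ 0 := ne_of_gt hsq
  have hform : Real.log 2 * Real.sqrt (1 - x ^ 2)
        + 1 / (2 * Real.sqrt (1 - x ^ 2)) * (-(2 * x))
      = (Real.log 2 * (1 - x ^ 2) - x) / Real.sqrt (1 - x ^ 2) := by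
    field_simp
    linear_combination (Real.log 2) * hsq2
  have hkey : Real.log 2 * Real.sqrt (1 - x ^ 2)
      + 1 / (2 * Real.sqrt (1 - x ^ 2)) * (-(2 * x)) < 0 := by
    rw [hform]
    exact div_neg_of_neg_of_pos (by linarith) hsq
  nlinarith [mul_pos hepos hsq]

/-- The key positivity: `F > 0` on the open interval. -/
lemma stmt15_main {t : ℝ} (ht : t ∈ Set.Ioo (0:ℝ) 1) : 0 < stmt15F t := by
  obtain ⟨ht0, ht1⟩ := ht
  by_contra hcon
  push_neg at hcon
  set F' : ℝ → ℝ := fun x =>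
    Real.log 2 * Real.exp (Real.log 2 * x) - (2 / π) * (1 / Real.sqrt (1 - x ^ 2)) with hF'
  obtain ⟨a, ha, hfa⟩ := exists_hasDerivAt_eq_slope stmt15F F' ht0
    stmt15F_cont.continuousOn
    (fun x hx => stmt15F_deriv ⟨by linarith [hx.1], by linarith [hx.2]⟩)
  obtain ⟨b, hb, hfb⟩ := exists_hasDerivAt_eq_slope stmt15F F' ht1
    stmt15F_cont.continuousOn
    (fun x hx => stmt15F_deriv ⟨by linarith [hx.1], by linarith [hx.2]⟩)
  rw [stmt15F_zero] at hfa
  rw [stmt15F_one] at hfb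
  have ha0 : 0 < a := ha.1
  have ha1 : a < 1 := lt_trans ha.2 ht1
  have hb1 : b < 1 := hb.2
  have hab : a < b := lt_trans ha.2 hb.1
  have hb0 : 0 < b := lt_trans ht0 hb.1
  have hsa : (0:ℝ) < Real.sqrt (1 - a ^ 2) := Real.sqrt_pos.mpr (by nlinarith)
  have hsb : (0:ℝ) < Real.sqrt (1 - b ^ 2) := Real.sqrt_pos.mpr (by nlinarith)
  have hL0 : (0:ℝ) < Real.log 2 := Real.log_pos (by norm_num)
  have hfa0 : F' a ≤ 0 := by
    rw [hfa]
    apply div_nonpos_of_nonpos_of_nonneg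
    · simpa using hcon
    · linarith
  have hfb0 : 0 ≤ F' b := by
    rw [hfb]
    apply div_nonneg
    · simpa using hcon
    · linarith
  have hforma : F' a * Real.sqrt (1 - a ^ 2) = Real.log 2 * stmt15G a - 2 / π := by
    rw [hF']
    unfold stmt15G
    field_simp
  have hformb : F' b * Real.sqrt (1 - b ^ 2) = Real.log 2 * stmt15G b - 2 / π := by
    rw [hF']
    unfold stmt15G
    field_simp
  have hga : Real.log 2 * stmt15G a ≤ 2 / π := by
    have h : F' a * Real.sqrt (1 - a ^ 2) ≤ 0 := by
      simpa using mul_le_mul_of_nonneg_right hfa0 hsa.le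
    rw [hforma] at h
    linarith
  have hgb : 2 / π ≤ Real.log 2 * stmt15G b := by
    have h : 0 ≤ F' b * Real.sqrt (1 - b ^ 2) := mul_nonneg hfb0 hsb.le
    rw [hformb] at h
    linarith
  have ha52 : (0.52:ℝ) < a := by
    by_contra hle
    push_neg at hle
    exact absurd hga (not_le.mpr (stmt15_claimB ha0.le hle))
  have hGba : stmt15G b < stmt15G a :=
    stmt15_claimC ⟨ha52.le, ha1.le⟩ ⟨(lt_trans ha52 hab).le, hb1.le⟩ hab
  nlinarith

/-- For every `ρ ∈ [0,1]`, `2^ρ ≥ 1 + (2/π) arcsin ρ`, with equality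
exactly at `ρ = 0` and `ρ = 1`. -/
theorem statement15 :
    ∀ ρ ∈ Set.Icc (0:ℝ) 1,
      1 + (2 / Real.pi) * Real.arcsin ρ ≤ (2:ℝ) ^ ρ ∧
      ((2:ℝ) ^ ρ = 1 + (2 / Real.pi) * Real.arcsin ρ ↔ ρ = 0 ∨ ρ = 1) := by
  intro ρ hρ
  have hrw : (2:ℝ) ^ ρ = Real.exp (Real.log 2 * ρ) := Real.rpow_def_of_pos two_pos ρ
  rcases eq_or_lt_of_le hρ.1 with h0 | h0
  · subst h0
    simp [Real.rpow_zero, Real.arcsin_zero]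
  · rcases eq_or_lt_of_le hρ.2 with h1 | h1
    · subst h1
      have hπ : (π : ℝ) ≠ 0 := Real.pi_ne_zero
      have heq : 1 + 2 / π * Real.arcsin 1 = 2 := by
        rw [Real.arcsin_one]; field_simp; ring
      rw [Real.rpow_one, heq]
      norm_num
    · have hF := stmt15_main ⟨h0, h1⟩
      unfold stmt15F at hF
      rw [← hrw] at hF
      refine ⟨by linarith, ?_, ?_⟩
      · intro heq; exfalso; linarith
      · rintro (h | h)
        · exact absurd h (ne_of_gt h0)
        · exact absurd h (ne_of_lt h1)
end

section
/- For every q ∈ (0, 1/2] and every ρ ∈ [0,1], 1 − 2q + q^{2−ρ} ≤ (1−q)^{2−ρ}. -/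
open Set Real

lemma aux_concave {s : ℝ} (hs1 : 1 ≤ s) (hs2 : s ≤ 2) :
    ConcaveOn ℝ (Set.Icc (0:ℝ) (1/2))
      (fun q : ℝ => (1 - q) ^ s - q ^ s + 2 * q - 1) := by
  have hs0 : (0:ℝ) < s := by linarith
  apply concaveOn_of_hasDerivWithinAt2_nonpos (f' := fun q => -(s * (1-q)^(s-1)) - s * q^(s-1) + 2)
    (f'' := fun q => s*(s-1)*(1-q)^(s-2) - s*(s-1)*q^(s-2)) (convex_Icc _ _)
  · apply ContinuousOn.sub
    apply ContinuousOn.add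
    apply ContinuousOn.sub
    · exact ((Real.continuous_rpow_const hs0.le).comp (continuous_const.sub continuous_id)).continuousOn
    · exact (Real.continuous_rpow_const hs0.le).continuousOn
    · exact (continuous_const.mul continuous_id).continuousOn
    · exact continuousOn_const
  · intro x hx
    rw [interior_Icc] at hx
    obtain ⟨hx0, hx1⟩ := hx
    have h1x : (1:ℝ) - x ≠ 0 := by norm_num; linarith
    have d1 : HasDerivAt (fun q : ℝ => (1 - q) ^ s) (-(s * (1-x)^(s-1))) x := by
      have := (Real.hasDerivAt_rpow_const (x := 1 - x) (p := s) (Or.inl h1x)).comp x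
        ((hasDerivAt_id x).const_sub 1)
      exact this.congr_deriv (by ring)
    have d2 : HasDerivAt (fun q : ℝ => q ^ s) (s * x^(s-1)) x :=
      Real.hasDerivAt_rpow_const (Or.inl hx0.ne')
    have h := (((d1.sub d2).add ((hasDerivAt_id x).const_mul 2)).sub_const 1).hasDerivWithinAt
      (s := interior (Set.Icc (0:ℝ) (1/2)))
    simp only [id_eq, mul_one] at h
    exact h
  · intro x hx
    rw [interior_Icc] at hx
    obtain ⟨hx0, hx1⟩ := hx
    have h1x : (1:ℝ) - x ≠ 0 := by norm_num; linarith
    have base : HasDerivAt (fun q : ℝ => (1 - q) ^ (s-1)) (-((s-1) * (1-x)^(s-2))) x := by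
      have := (Real.hasDerivAt_rpow_const (x := 1 - x) (p := s-1) (Or.inl h1x)).comp x
        ((hasDerivAt_id x).const_sub 1)
      exact this.congr_deriv (by rw [show s-1-1 = s-2 from by ring]; ring)
    have base2 : HasDerivAt (fun q : ℝ => q ^ (s-1)) ((s-1) * x^(s-2)) x := by
      have := Real.hasDerivAt_rpow_const (x := x) (p := s-1) (Or.inl hx0.ne')
      rwa [show s-1-1 = s-2 from by ring] at this
    have d1 := (base.const_mul s).neg
    have d2 := base2.const_mul s
    have h := ((d1.sub d2).add_const 2).hasDerivWithinAt
      (s := interior (Set.Icc (0:ℝ) (1/2)))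
    exact h.congr_deriv (by beta_reduce; ring)
  · intro x hx
    rw [interior_Icc] at hx
    obtain ⟨hx0, hx1⟩ := hx
    have key : (1 - x) ^ (s-2) ≤ x ^ (s-2) :=
      Real.rpow_le_rpow_of_nonpos hx0 (by linarith) (by linarith)
    have hss : 0 ≤ s * (s - 1) := by nlinarith
    nlinarith [mul_le_mul_of_nonneg_left key hss]

/-- For every `q ∈ (0, 1/2]` and every `ρ ∈ [0,1]`,
`1 - 2q + q^(2-ρ) ≤ (1-q)^(2-ρ)`. -/
theorem statement16 :
    ∀ q ∈ Set.Ioc (0:ℝ) (1/2), ∀ ρ ∈ Set.Icc (0:ℝ) 1,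
      1 - 2 * q + q ^ (2 - ρ) ≤ (1 - q) ^ (2 - ρ) := by
  rintro q ⟨hq0, hq1⟩ ρ ⟨hr0, hr1⟩
  set s := 2 - ρ with hs
  have hs1 : 1 ≤ s := by simp [hs]; linarith
  have hs2 : s ≤ 2 := by simp [hs]; linarith
  have hC := aux_concave hs1 hs2
  have h0 : (0:ℝ) ∈ Set.Icc (0:ℝ) (1/2) := by norm_num
  have hh : (1/2:ℝ) ∈ Set.Icc (0:ℝ) (1/2) := by norm_num
  have ha : (0:ℝ) ≤ 1 - 2*q := by linarith
  have hb : (0:ℝ) ≤ 2*q := by linarith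
  have hab : (1 - 2*q) + 2*q = 1 := by ring
  have := hC.2 h0 hh ha hb hab
  simp only [smul_eq_mul] at this
  have hq : (1 - 2*q) * 0 + 2*q * (1/2) = q := by ring
  rw [hq] at this
  have h0s : (0:ℝ) ^ s = 0 := Real.zero_rpow (by linarith)
  have h1s : (1:ℝ) - 0 = 1 := by norm_num
  simp only [h1s, h0s, Real.one_rpow] at this
  nlinarith [this]
end
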